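/- For every integer k ≥ 1, there exists a dual graph of type (4, 4k+4) whose diameter is at least 6k; that is, μ(4, 4k+4) ≥ 6k. -/

import Mathlib

/-!
The gadget is a dual graph of type (4,8) with 18 facets, arranged in seven layers so that its
bottom facet {0,1,2,3} and top facet {4,5,6,7} are at distance 6. Condition (i) holds for it by
descent: from `u` one can always step to a neighbour that still contains `u ∩ v` and is closer
to `v`.

Chaining `k` copies, copy `j` on the letters `4j, …, 4j+7`, identifies the top facet of each copy
with the bottom facet of the next. Two copies meet at most in such a shared facet, so walks
witnessing (i) can be routed through it, and every edge of the chain lies inside a single copy.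
Hence `6j + level`, for a facet of level `level` in copy `j`, is a well-defined potential that
changes by at most one along edges and rises by `6k` from the bottom of the first copy to the top
of the last.
-/

open SimpleGraph

/-- The graph on a family `V` of subsets of `{1,…,n}` in which two distinct
members are adjacent iff their intersection has `d - 1` elements
(property (ii) of a dual graph of type `(d,n)`). -/
def adjGraph (n d : ℕ) (V : Finset (Finset (Fin n))) :
    SimpleGraph {u : Finset (Fin n) // u ∈ V} where
  Adj u v := u ≠ v ∧ (u.1 ∩ v.1).card = d - 1
  symm := by
    refine ⟨?_⟩
    rintro u v ⟨h1, h2⟩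
    exact ⟨h1.symm, by rwa [Finset.inter_comm]⟩
  loopless := ⟨fun u h => h.1 rfl⟩

/-- `V` is (the vertex set of) a dual graph of type `(d,n)`:
a nonempty family of `d`-element subsets of `{1,…,n}` such that, with adjacency
given by property (ii), any two vertices `u`, `v` are joined by a walk all of
whose vertices contain `u ∩ v` (property (i)). -/
structure IsDualGraph (d n : ℕ) (V : Finset (Finset (Fin n))) : Prop where
  nonempty : V.Nonempty
  card_eq : ∀ u ∈ V, u.card = d
  locally_connected : ∀ u v : {x : Finset (Fin n) // x ∈ V},
    ∃ w : (adjGraph n d V).Walk u v, ∀ x ∈ w.support, u.1 ∩ v.1 ⊆ x.1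

open Finset SimpleGraph

section Walks

variable {V : Type*} {G : SimpleGraph V} {φ : V → ℕ}

theorem SimpleGraph.Walk.le_add_length_of_adj (hφ : ∀ u v, G.Adj u v → φ v ≤ φ u + 1)
    {u v : V} (p : G.Walk u v) : φ v ≤ φ u + p.length := by
  induction p with
  | nil => simp
  | cons h _ ih =>
    have := hφ _ _ h
    rw [Walk.length_cons]
    omega

theorem SimpleGraph.Reachable.le_add_dist_of_adj (hφ : ∀ u v, G.Adj u v → φ v ≤ φ u + 1)
    {u v : V} (h : G.Reachable u v) : φ v ≤ φ u + G.dist u v := by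
  obtain ⟨p, hp⟩ := h.exists_walk_length_eq_dist
  exact hp ▸ p.le_add_length_of_adj hφ

end Walks

section AdjGraph

variable {m n d : ℕ} {V : Finset (Finset (Fin n))}

theorem adjGraph.exists_walk_of_descent (μ : Finset (Fin n) → Finset (Fin n) → ℕ)
    (hμ : ∀ u ∈ V, ∀ v ∈ V, u ≠ v →
      ∃ w ∈ V, (u ∩ w).card = d - 1 ∧ u ∩ v ⊆ w ∧ μ w v < μ u v)
    (u v : {x // x ∈ V}) :
    ∃ p : (adjGraph n d V).Walk u v, ∀ x ∈ p.support, u.1 ∩ v.1 ⊆ x.1 := by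
  -- each step keeps `u ∩ v`, hence any `S ⊆ u ∩ v`, so `S` can be fixed along the induction
  suffices h : ∀ N (u : {x // x ∈ V}) (S : Finset (Fin n)), μ u.1 v.1 = N → S ⊆ u.1 ∩ v.1 →
      ∃ p : (adjGraph n d V).Walk u v, ∀ x ∈ p.support, S ⊆ x.1 from
    h _ u _ rfl subset_rfl
  intro N
  induction N using Nat.strong_induction_on with
  | _ N ih =>
    intro u S hN hS
    by_cases huv : u = v
    · subst huv
      exact ⟨.nil, by simpa using hS.trans inter_subset_left⟩
    obtain ⟨w, hwV, hcard, hsub, hlt⟩ := hμ u.1 u.2 v.1 v.2 (Subtype.coe_ne_coe.2 huv)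
    have hadj : (adjGraph n d V).Adj u ⟨w, hwV⟩ :=
      ⟨fun h => (congrArg Subtype.val h ▸ hlt).false, hcard⟩
    obtain ⟨p, hp⟩ := ih _ (hN ▸ hlt) ⟨w, hwV⟩ S rfl
      (subset_inter (hS.trans hsub) (hS.trans inter_subset_right))
    refine ⟨.cons hadj p, fun x hx => ?_⟩
    rcases List.mem_cons.1 (Walk.support_cons hadj p ▸ hx) with rfl | hx
    · exact hS.trans inter_subset_left
    · exact hp x hx

theorem IsDualGraph.connected (h : IsDualGraph d n V) :
    (adjGraph n d V).Connected := by
  obtain ⟨u, hu⟩ := h.nonempty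
  have : Nonempty {x // x ∈ V} := ⟨⟨u, hu⟩⟩
  exact .mk fun u v => (h.locally_connected u v).elim fun p _ => ⟨p⟩

def adjGraph.mapOfEmbedding (f : Fin m ↪ Fin n) {U : Finset (Finset (Fin m))}
    (hUV : ∀ u ∈ U, u.map f ∈ V) : adjGraph m d U →g adjGraph n d V where
  toFun u := ⟨u.1.map f, hUV _ u.2⟩
  map_rel' := fun {u v} ⟨hne, hcard⟩ =>
    ⟨fun h => hne (Subtype.ext (map_injective f (congrArg Subtype.val h))),
      by rw [← map_inter, card_map, hcard]⟩

end AdjGraph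

namespace Gadget

/-- The facets of the gadget, grouped by their distance from `bottom`. -/
def layers : List (List (Finset (Fin 8))) :=
  [[{0, 1, 2, 3}],
   [{0, 1, 2, 7}, {0, 1, 3, 6}],
   [{0, 2, 4, 7}, {0, 3, 4, 6}, {1, 2, 5, 7}, {1, 3, 5, 6}],
   [{0, 2, 4, 6}, {0, 3, 4, 7}, {1, 2, 5, 6}, {1, 3, 5, 7}],
   [{0, 2, 5, 6}, {0, 3, 5, 7}, {1, 2, 4, 6}, {1, 3, 4, 7}],
   [{0, 5, 6, 7}, {1, 4, 6, 7}],
   [{4, 5, 6, 7}]]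

def facets : Finset (Finset (Fin 8)) := layers.flatten.toFinset

def level (g : Finset (Fin 8)) : ℕ := layers.findIdx (g ∈ ·)

def bottom : Finset (Fin 8) := {0, 1, 2, 3}

def top : Finset (Fin 8) := {4, 5, 6, 7}

/-- Levels differ by at most `6`, so this orders pairs lexicographically: first by how much of
`w` misses `v`, then by how far apart their levels are. -/
def descentMeasure (w v : Finset (Fin 8)) : ℕ := 7 * (w \ v).card + Nat.dist (level w) (level v)

theorem bottom_mem : bottom ∈ facets := by decide

theorem top_mem : top ∈ facets := by decide

theorem level_bottom : level bottom = 0 := rfl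

theorem level_top : level top = 6 := rfl

theorem mem_bottom {a : Fin 8} : a ∈ bottom ↔ (a : ℕ) < 4 := by revert a; decide

theorem mem_top {a : Fin 8} : a ∈ top ↔ 4 ≤ (a : ℕ) := by revert a; decide

theorem val_sub_four {a : Fin 8} (h : 4 ≤ (a : ℕ)) : ((a - 4 : Fin 8) : ℕ) = a - 4 := by
  revert a; decide

set_option maxRecDepth 100000

theorem card_eq : ∀ g ∈ facets, g.card = 4 := by decide

theorem level_le_succ_of_card_inter : ∀ g ∈ facets, ∀ g' ∈ facets,
    (g ∩ g').card = 3 → level g' ≤ level g + 1 := by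
  decide

theorem exists_descent : ∀ u ∈ facets, ∀ v ∈ facets, u ≠ v →
    ∃ w ∈ facets, (u ∩ w).card = 3 ∧ u ∩ v ⊆ w ∧ descentMeasure w v < descentMeasure u v := by
  decide

/-- `(· - 4)` renames the letters of `top` as the next copy in the chain reads them. -/
theorem card_shift_inter_le : ∀ g ∈ facets, ∀ g' ∈ facets, g ≠ top → g' ≠ bottom →
    ((g ∩ top).image (· - 4) ∩ g').card ≤ 2 := by
  decide

theorem isDualGraph : IsDualGraph 4 8 facets where
  nonempty := ⟨_, bottom_mem⟩
  card_eq := card_eq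
  locally_connected := adjGraph.exists_walk_of_descent descentMeasure exists_descent

theorem eq_top_of_subset {g : Finset (Fin 8)} (hg : g ∈ facets) (h : g ⊆ top) : g = top :=
  eq_of_subset_of_card_le h (by rw [card_eq g hg]; rfl)

theorem eq_bottom_of_subset {g : Finset (Fin 8)} (hg : g ∈ facets) (h : g ⊆ bottom) :
    g = bottom :=
  eq_of_subset_of_card_le h (by rw [card_eq g hg]; rfl)

end Gadget

namespace Chain

open Gadget

variable {k : ℕ}

def emb (j : Fin k) : Fin 8 ↪ Fin (4 * k + 4) where
  toFun a := ⟨4 * j + a, by omega⟩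
  inj' a b h := Fin.ext (by simpa using congrArg Fin.val h)

def copy (j : Fin k) (g : Finset (Fin 8)) : Finset (Fin (4 * k + 4)) := g.map (emb j)

def facets (k : ℕ) : Finset (Finset (Fin (4 * k + 4))) :=
  (univ ×ˢ Gadget.facets).image fun p => copy p.1 p.2

theorem mem_copy {j : Fin k} {g : Finset (Fin 8)} {x : Fin (4 * k + 4)} :
    x ∈ copy j g ↔ ∃ a ∈ g, 4 * (j : ℕ) + a = x := by
  simp only [copy, mem_map, Fin.ext_iff]
  rfl

theorem copy_mem_facets (j : Fin k) {g : Finset (Fin 8)} (hg : g ∈ Gadget.facets) :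
    copy j g ∈ facets k :=
  mem_image.2 ⟨(j, g), mem_product.2 ⟨mem_univ _, hg⟩, rfl⟩

theorem mem_facets {u : Finset (Fin (4 * k + 4))} :
    u ∈ facets k ↔ ∃ j, ∃ g ∈ Gadget.facets, copy j g = u := by
  simp [facets]

theorem copy_inter (j : Fin k) (g g' : Finset (Fin 8)) :
    copy j (g ∩ g') = copy j g ∩ copy j g' :=
  map_inter g g'

theorem card_copy (j : Fin k) (g : Finset (Fin 8)) : (copy j g).card = g.card :=
  card_map _

theorem copy_top {j j' : Fin k} (h : (j : ℕ) + 1 = j') : copy j top = copy j' bottom := by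
  ext x
  simp only [mem_copy, mem_top, mem_bottom]
  constructor
  · rintro ⟨a, ha, hx⟩
    exact ⟨⟨a - 4, by omega⟩, by simp only; omega, by simp only; omega⟩
  · rintro ⟨a, ha, hx⟩
    exact ⟨⟨a + 4, by omega⟩, by simp only; omega, by simp only; omega⟩

theorem copy_nonempty (j : Fin k) {g : Finset (Fin 8)} (hg : g ∈ Gadget.facets) :
    (copy j g).Nonempty :=
  card_pos.1 (by rw [card_copy, Gadget.card_eq g hg]; omega)

theorem disjoint_copy {j j' : Fin k} (hjj : (j : ℕ) + 1 < j') (g g' : Finset (Fin 8)) :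
    Disjoint (copy j g) (copy j' g') := by
  rw [Finset.disjoint_left]
  intro x hx hx'
  obtain ⟨a, -, hxa⟩ := mem_copy.1 hx
  obtain ⟨b, -, hxb⟩ := mem_copy.1 hx'
  omega

theorem copy_inter_copy_subset {j j' : Fin k} (hjj : j < j') (g g' : Finset (Fin 8)) :
    copy j g ∩ copy j' g' ⊆ copy j (g ∩ top) := by
  intro x hx
  obtain ⟨⟨a, ha, hxa⟩, ⟨b, -, hxb⟩⟩ := (mem_inter.1 hx).imp mem_copy.1 mem_copy.1
  have : 4 ≤ (a : ℕ) := by have := Fin.lt_def.1 hjj; omega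
  exact mem_copy.2 ⟨a, mem_inter.2 ⟨ha, mem_top.2 this⟩, hxa⟩

theorem copy_inter_copy_subset_bottom {j j' : Fin k} (hjj : j < j') (g g' : Finset (Fin 8)) :
    copy j g ∩ copy j' g' ⊆ copy j' (bottom ∩ g') := by
  intro x hx
  obtain ⟨⟨a, -, hxa⟩, ⟨b, hb, hxb⟩⟩ := (mem_inter.1 hx).imp mem_copy.1 mem_copy.1
  have : (b : ℕ) < 4 := by have := Fin.lt_def.1 hjj; omega
  exact mem_copy.2 ⟨b, mem_inter.2 ⟨mem_bottom.2 this, hb⟩, hxb⟩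

theorem exists_walk_in_copy (j : Fin k) {g g' : Finset (Fin 8)} (hg : g ∈ Gadget.facets)
    (hg' : g' ∈ Gadget.facets) {S : Finset (Fin (4 * k + 4))} (hS : S ⊆ copy j (g ∩ g')) :
    ∃ p : (adjGraph (4 * k + 4) 4 (facets k)).Walk ⟨copy j g, copy_mem_facets j hg⟩
      ⟨copy j g', copy_mem_facets j hg'⟩, ∀ x ∈ p.support, S ⊆ x.1 := by
  obtain ⟨p, hp⟩ := Gadget.isDualGraph.locally_connected ⟨g, hg⟩ ⟨g', hg'⟩
  let φ := adjGraph.mapOfEmbedding (d := 4) (emb j) fun _ hu => copy_mem_facets j hu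
  refine ⟨p.map φ, fun x hx => ?_⟩
  obtain ⟨y, hy, rfl⟩ := List.mem_map.1 (Walk.support_map φ p ▸ hx)
  exact hS.trans (map_subset_map.2 (hp y hy))

theorem exists_walk_copy {j j' : Fin k} (hjj : j ≤ j') {g g' : Finset (Fin 8)}
    (hg : g ∈ Gadget.facets) (hg' : g' ∈ Gadget.facets) {S : Finset (Fin (4 * k + 4))}
    (hS : S ⊆ copy j g ∩ copy j' g') :
    ∃ p : (adjGraph (4 * k + 4) 4 (facets k)).Walk ⟨copy j g, copy_mem_facets j hg⟩
      ⟨copy j' g', copy_mem_facets j' hg'⟩, ∀ x ∈ p.support, S ⊆ x.1 := by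
  obtain ⟨N, hN⟩ : ∃ N, (j' : ℕ) = j + N := Nat.exists_eq_add_of_le hjj
  induction N generalizing j g with
  | zero =>
    obtain rfl : j = j' := Fin.ext (by omega)
    exact exists_walk_in_copy j hg hg' (copy_inter j g g' ▸ hS)
  | succ N ih =>
    -- route through the top facet of copy `j`, which is the bottom facet of copy `j + 1`
    let j₁ : Fin k := ⟨j + 1, by omega⟩
    have hport : copy j top = copy j₁ bottom := copy_top rfl
    have hStop : S ⊆ copy j (g ∩ top) :=
      hS.trans (copy_inter_copy_subset (Fin.lt_def.2 (by omega)) g g')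
    obtain ⟨p, hp⟩ := exists_walk_in_copy j hg top_mem hStop
    have hSbot : S ⊆ copy j₁ bottom :=
      hport ▸ hStop.trans (copy_inter j g top ▸ inter_subset_right)
    obtain ⟨q, hq⟩ := ih (j := j₁) (Fin.le_def.2 (by simp only [j₁]; omega)) bottom_mem
      (subset_inter hSbot (hS.trans inter_subset_right)) (by simp only [j₁]; omega)
    refine ⟨p.append (q.copy (Subtype.ext hport.symm) rfl), fun x hx => ?_⟩
    rw [Walk.mem_support_append_iff, Walk.support_copy] at hx
    exact hx.elim (hp x) (hq x)

theorem isDualGraph (hk : 0 < k) : IsDualGraph 4 (4 * k + 4) (facets k) where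
  nonempty := ⟨_, copy_mem_facets ⟨0, hk⟩ bottom_mem⟩
  card_eq u hu := by
    obtain ⟨j, g, hg, rfl⟩ := mem_facets.1 hu
    rw [card_copy, Gadget.card_eq g hg]
  locally_connected := by
    rintro ⟨u, hu⟩ ⟨v, hv⟩
    obtain ⟨j, g, hg, rfl⟩ := mem_facets.1 hu
    obtain ⟨j', g', hg', rfl⟩ := mem_facets.1 hv
    rcases le_total j j' with hjj | hjj
    · exact exists_walk_copy hjj hg hg' subset_rfl
    · obtain ⟨p, hp⟩ := exists_walk_copy hjj hg' hg subset_rfl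
      refine ⟨p.reverse, fun x hx => inter_comm (copy j g) _ ▸ hp x ?_⟩
      rwa [Walk.support_reverse, List.mem_reverse] at hx

theorem six_mul_add_level_eq_of_copy_eq {j j' : Fin k} {g g' : Finset (Fin 8)}
    (hg : g ∈ Gadget.facets) (hg' : g' ∈ Gadget.facets) (h : copy j g = copy j' g') :
    6 * (j : ℕ) + level g = 6 * j' + level g' := by
  wlog hjj : j ≤ j' generalizing j j' g g'
  · exact (this hg' hg h.symm (le_of_not_ge hjj)).symm
  rcases hjj.eq_or_lt with rfl | hlt
  · rw [map_injective (emb j) h]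
  -- a facet lying in two different copies is the facet they share
  have htop : copy j g ⊆ copy j (g ∩ top) := by
    simpa only [← h, inter_self] using copy_inter_copy_subset hlt g g'
  have hbot : copy j' g' ⊆ copy j' (bottom ∩ g') := by
    simpa only [h, inter_self] using copy_inter_copy_subset_bottom hlt g g'
  obtain rfl := eq_top_of_subset hg ((map_subset_map.1 htop).trans inter_subset_right)
  obtain rfl := eq_bottom_of_subset hg' ((map_subset_map.1 hbot).trans inter_subset_left)
  obtain ⟨x, hx⟩ := copy_nonempty j top_mem
  have : (j : ℕ) + 1 = j' := by
    by_contra hne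
    exact Finset.disjoint_left.1 (disjoint_copy (by omega) top bottom) hx (h ▸ hx)
  rw [level_top, level_bottom]
  omega

noncomputable def potential (u : {x // x ∈ facets k}) : ℕ :=
  6 * ((mem_image.1 u.2).choose.1 : ℕ) + level (mem_image.1 u.2).choose.2

theorem potential_eq {u : {x // x ∈ facets k}} {j : Fin k} {g : Finset (Fin 8)}
    (hg : g ∈ Gadget.facets) (hu : u.1 = copy j g) : potential u = 6 * j + level g := by
  obtain ⟨hp, hpu⟩ := (mem_image.1 u.2).choose_spec
  exact six_mul_add_level_eq_of_copy_eq (mem_product.1 hp).2 hg (hpu.trans hu)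

theorem card_copy_inter_copy_le {j j' : Fin k} (hjj : (j : ℕ) + 1 = j') {g g' : Finset (Fin 8)}
    (hg : g ∈ Gadget.facets) (hg' : g' ∈ Gadget.facets) (hgt : g ≠ top) (hgb : g' ≠ bottom) :
    (copy j g ∩ copy j' g').card ≤ 2 := by
  have hsub : copy j g ∩ copy j' g' ⊆ copy j' ((g ∩ top).image (· - 4) ∩ g') := by
    intro x hx
    obtain ⟨⟨a, ha, hxa⟩, ⟨b, hb, hxb⟩⟩ := (mem_inter.1 hx).imp mem_copy.1 mem_copy.1
    have hab : a - 4 = b := Fin.ext (by rw [val_sub_four (by omega)]; omega)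
    exact mem_copy.2 ⟨b, mem_inter.2 ⟨mem_image.2 ⟨a, mem_inter.2 ⟨ha, mem_top.2 (by omega)⟩,
      hab⟩, hb⟩, hxb⟩
  calc (copy j g ∩ copy j' g').card ≤ _ := card_le_card hsub
    _ ≤ 2 := card_copy j' _ ▸ card_shift_inter_le g hg g' hg' hgt hgb

theorem exists_common_copy {j j' : Fin k} {g g' : Finset (Fin 8)} (hg : g ∈ Gadget.facets)
    (hg' : g' ∈ Gadget.facets) (h : (copy j g ∩ copy j' g').card = 3) :
    ∃ J, ∃ c ∈ Gadget.facets, ∃ c' ∈ Gadget.facets,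
      copy j g = copy J c ∧ copy j' g' = copy J c' := by
  wlog hjj : j ≤ j' generalizing j j' g g'
  · obtain ⟨J, c, hc, c', hc', e, e'⟩ := this hg' hg (inter_comm (copy j g) _ ▸ h)
      (le_of_not_ge hjj)
    exact ⟨J, c', hc', c, hc, e', e⟩
  rcases hjj.eq_or_lt with rfl | hlt
  · exact ⟨j, g, hg, g', hg', rfl, rfl⟩
  obtain ⟨x, hx⟩ := card_pos.1 (h ▸ three_pos : 0 < (copy j g ∩ copy j' g').card)
  have hsucc : (j : ℕ) + 1 = j' := by
    have := Fin.lt_def.1 hlt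
    by_contra hne
    exact Finset.disjoint_left.1 (disjoint_copy (by omega) g g') (mem_inter.1 hx).1
      (mem_inter.1 hx).2
  by_cases hgt : g = top
  · exact ⟨j', bottom, bottom_mem, g', hg', hgt ▸ copy_top hsucc, rfl⟩
  by_cases hgb : g' = bottom
  · exact ⟨j, g, hg, top, top_mem, rfl, hgb ▸ (copy_top hsucc).symm⟩
  have := card_copy_inter_copy_le hsucc hg hg' hgt hgb
  omega

theorem potential_le_of_adj {u v : {x // x ∈ facets k}}
    (huv : (adjGraph (4 * k + 4) 4 (facets k)).Adj u v) : potential v ≤ potential u + 1 := by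
  obtain ⟨j, g, hg, hu⟩ := mem_facets.1 u.2
  obtain ⟨j', g', hg', hv⟩ := mem_facets.1 v.2
  have hcard : (copy j g ∩ copy j' g').card = 3 := hu ▸ hv ▸ huv.2
  obtain ⟨J, c, hc, c', hc', eu, ev⟩ := exists_common_copy hg hg' hcard
  rw [potential_eq hc (hu.symm.trans eu), potential_eq hc' (hv.symm.trans ev)]
  have := level_le_succ_of_card_inter c hc c' hc' (by rwa [← card_copy J, copy_inter, ← eu, ← ev])
  omega

end Chain

/-- μ(4, 4k+4) ≥ 6k for all k ≥ 1. -/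
theorem mu_four_glue (k : ℕ) (hk : 1 ≤ k) :
    ∃ V : Finset (Finset (Fin (4 * k + 4))), IsDualGraph 4 (4 * k + 4) V ∧
      6 * k ≤ (adjGraph (4 * k + 4) 4 V).diam := by
  refine ⟨Chain.facets k, Chain.isDualGraph hk, ?_⟩
  have hconn := (Chain.isDualGraph hk).connected
  have := hconn.nonempty
  let s : {x // x ∈ Chain.facets k} :=
    ⟨Chain.copy ⟨0, hk⟩ Gadget.bottom, Chain.copy_mem_facets _ Gadget.bottom_mem⟩
  let t : {x // x ∈ Chain.facets k} :=
    ⟨Chain.copy ⟨k - 1, by omega⟩ Gadget.top, Chain.copy_mem_facets _ Gadget.top_mem⟩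
  have hs : Chain.potential s = 0 := by
    rw [Chain.potential_eq Gadget.bottom_mem rfl, Gadget.level_bottom]
    rfl
  have ht : Chain.potential t = 6 * k := by
    rw [Chain.potential_eq Gadget.top_mem rfl, Gadget.level_top]
    simp only
    omega
  calc 6 * k ≤ (adjGraph (4 * k + 4) 4 (Chain.facets k)).dist s t := by
        have := (hconn s t).le_add_dist_of_adj (fun _ _ => Chain.potential_le_of_adj)
        omega
    _ ≤ _ := dist_le_diam (connected_iff_ediam_ne_top.1 hconn)
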